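/- Let Ω be a metric space with Borel σ-algebra 𝓕, B_b the space of bounded Borel measurable functions f : Ω → ℝ, C_b the space of bounded continuous functions, and U_b the space of bounded upper semicontinuous functions. Let φ : B_b → ℝ be a positive linear functional satisfying condition (C), and let μ ∈ ca⁺_r(𝓕) be the regular finite measure with φ(f) = ⟨f,μ⟩ for all f ∈ C_b. Then φ(f) ≤ ⟨f,μ⟩ for all f ∈ U_b and φ_r(f) ≤ ⟨f,μ⟩ for all f ∈ B_b, where φ_r(f) := sup{φ(g) : g ∈ U_b, g ≤ f}; and both inequalities are equalities if φ*_{C_b}(ν) = φ*_{U_b}(ν) for all ν ∈ ca⁺_r(𝓕). In particular, if in addition φ is lower regular (φ = φ_r), then φ(f) = ⟨f,μ⟩ for all f ∈ B_b. -/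

import Mathlib

/-!
For `f ∈ U_b` with `|f| ≤ M`, the Lipschitz envelopes `x ↦ sup_y (f y - n d(x, y))` are bounded
continuous functions above `f` converging to it pointwise, so positivity of `φ` and dominated
convergence give `φ f ≤ ⟨f, μ⟩`, hence also `φ_r f ≤ ⟨f, μ⟩`. As `φ = ⟨·, μ⟩` on `C_b`, we have
`φ*_{C_b}(μ) = 0`; if this equals `φ*_{U_b}(μ)`, then `⟨f, μ⟩ - φ f ≤ 0` on `U_b`. Finally,
Vitali–Carathéodory applied to `f + M ≥ 0` approximates any `f ∈ B_b` from below in `L¹(μ)` by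
functions in `U_b`, so `φ_r f = ⟨f, μ⟩` once `φ = ⟨·, μ⟩` on `U_b`.
-/

open MeasureTheory Filter Topology Set

variable {Ω : Type*} [MetricSpace Ω] [MeasurableSpace Ω] [BorelSpace Ω]

/-- Bounded Borel measurable real-valued functions. -/
def Bb (Ω : Type*) [TopologicalSpace Ω] [MeasurableSpace Ω] : Set (Ω → ℝ) :=
  {f | Measurable f ∧ ∃ M : ℝ, ∀ ω, |f ω| ≤ M}

/-- Bounded continuous real-valued functions. -/
def Cb (Ω : Type*) [TopologicalSpace Ω] : Set (Ω → ℝ) :=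
  {f | Continuous f ∧ ∃ M : ℝ, ∀ ω, |f ω| ≤ M}

/-- Bounded upper semicontinuous real-valued functions. -/
def Ub (Ω : Type*) [TopologicalSpace Ω] : Set (Ω → ℝ) :=
  {f | UpperSemicontinuous f ∧ ∃ M : ℝ, ∀ ω, |f ω| ≤ M}

/-- ca⁺_r(𝓕): regular finite measures on the Borel σ-algebra. -/
def caReg (Ω : Type*) [TopologicalSpace Ω] [MeasurableSpace Ω] : Set (Measure Ω) :=
  {μ | IsFiniteMeasure μ ∧ ∀ A : Set Ω, MeasurableSet A →
    μ A = ⨆ B ∈ {B : Set Ω | MeasurableSet B ∧ IsClosed B ∧ IsCompact B ∧ B ⊆ A}, μ B}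

/-- Condition (C) for a real-valued functional on B_b. -/
def CondCR (φ : (Ω → ℝ) → ℝ) : Prop :=
  ∃ K : ℕ → Set Ω, (∀ n, IsCompact (K n)) ∧ (∀ n, K n ⊆ K (n + 1)) ∧
    ∀ (fn : ℕ → Ω → ℝ) (f : Ω → ℝ), (∀ n, fn n ∈ Bb Ω) → f ∈ Bb Ω →
      (∀ n ω, fn n ω ≤ fn (n + 1) ω) →
      (∀ m n, m ≤ n → ∀ ω ∈ K m, fn n ω = f ω) →
      (Monotone fun n => φ (fn n)) ∧ Tendsto (fun n => φ (fn n)) atTop (𝓝 (φ f))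

/-- The lower regularization φ_r of a real-valued φ. -/
noncomputable def lowerRegR (φ : (Ω → ℝ) → ℝ) (f : Ω → ℝ) : ℝ :=
  sSup (φ '' {g | g ∈ Ub Ω ∧ ∀ ω, g ω ≤ f ω})

/-- The conjugate of a real-valued φ over a class S of functions. -/
noncomputable def conjOnR (S : Set (Ω → ℝ)) (φ : (Ω → ℝ) → ℝ) (ν : Measure Ω) : EReal :=
  ⨆ f ∈ S, ((∫ ω, f ω ∂ν : ℝ) : EReal) - ((φ f : ℝ) : EReal)


section LipschitzEnvelope

variable {X : Type*} [PseudoMetricSpace X] {f : X → ℝ} {M : ℝ}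

noncomputable def lipEnvelope (f : X → ℝ) (n : ℕ) (x : X) : ℝ :=
  ⨆ y, f y - n * dist x y

lemma bddAbove_lipEnvelope_range (hM : ∀ y, f y ≤ M) (n : ℕ) (x : X) :
    BddAbove (range fun y => f y - n * dist x y) := by
  refine ⟨M, ?_⟩
  rintro _ ⟨y, rfl⟩
  have : (0 : ℝ) ≤ n * dist x y := by positivity
  linarith [hM y]

lemma le_lipEnvelope (hM : ∀ y, f y ≤ M) (n : ℕ) (x : X) : f x ≤ lipEnvelope f n x :=
  le_ciSup_of_le (bddAbove_lipEnvelope_range hM n x) x (by simp)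

lemma lipEnvelope_le (hM : ∀ y, f y ≤ M) (n : ℕ) (x : X) : lipEnvelope f n x ≤ M := by
  have : Nonempty X := ⟨x⟩
  refine ciSup_le fun y => ?_
  have : (0 : ℝ) ≤ n * dist x y := by positivity
  linarith [hM y]

lemma abs_lipEnvelope_le (hM : ∀ y, |f y| ≤ M) (n : ℕ) (x : X) : |lipEnvelope f n x| ≤ M := by
  have hM' : ∀ y, f y ≤ M := fun y => (abs_le.1 (hM y)).2
  exact abs_le.2 ⟨(abs_le.1 (hM x)).1.trans (le_lipEnvelope hM' n x), lipEnvelope_le hM' n x⟩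

lemma lipschitzWith_lipEnvelope (hM : ∀ y, f y ≤ M) (n : ℕ) :
    LipschitzWith n (lipEnvelope f n) := by
  refine LipschitzWith.of_le_add_mul _ fun x x' => ?_
  have : Nonempty X := ⟨x⟩
  refine ciSup_le fun y => ?_
  have htri : n * dist x' y ≤ n * dist x y + n * dist x x' := by
    rw [← mul_add, add_comm, dist_comm x x']
    exact mul_le_mul_of_nonneg_left (dist_triangle x' x y) (by positivity)
  have : f y - n * dist x' y ≤ lipEnvelope f n x' :=
    le_ciSup (bddAbove_lipEnvelope_range hM n x') y
  simp only [NNReal.coe_natCast]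
  linarith

lemma UpperSemicontinuous.tendsto_lipEnvelope (hf : UpperSemicontinuous f)
    (hM : ∀ y, f y ≤ M) (x : X) :
    Tendsto (fun n => lipEnvelope f n x) atTop (𝓝 (f x)) := by
  refine tendsto_order.2 ⟨fun a ha => Eventually.of_forall fun n =>
    ha.trans_le (le_lipEnvelope hM n x), fun a ha => ?_⟩
  obtain ⟨b, hxb, hba⟩ := exists_between ha
  obtain ⟨δ, hδ, hball⟩ := Metric.eventually_nhds_iff.1 (hf x b hxb)
  obtain ⟨N, hN⟩ := exists_nat_ge ((M - b) / δ)
  have : Nonempty X := ⟨x⟩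
  refine eventually_atTop.2 ⟨N, fun n hn => (ciSup_le fun y => ?_).trans_lt hba⟩
  have hdist : (0 : ℝ) ≤ n * dist x y := by positivity
  rcases lt_or_ge (dist y x) δ with hy | hy
  · linarith [hball hy]
  -- far from `x`, the penalty `n * δ` already exceeds `M - b`
  have hNδ : M - b ≤ n * δ := by
    calc M - b ≤ N * δ := (div_le_iff₀ hδ).1 hN
      _ ≤ n * δ := by gcongr
  have : (n : ℝ) * δ ≤ n * dist x y := by rw [dist_comm]; gcongr
  linarith [hM y]

end LipschitzEnvelope

section BoundedFunctions

variable {X : Type*} [TopologicalSpace X] [MeasurableSpace X]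

lemma sub_mem_Bb {f g : X → ℝ} (hf : f ∈ Bb X) (hg : g ∈ Bb X) : f - g ∈ Bb X := by
  obtain ⟨Mf, hMf⟩ := hf.2
  obtain ⟨Mg, hMg⟩ := hg.2
  refine ⟨hf.1.sub hg.1, Mf + Mg, fun x => ?_⟩
  calc |f x - g x| ≤ |f x| + |g x| := abs_sub _ _
    _ ≤ Mf + Mg := add_le_add (hMf x) (hMg x)

lemma Cb_subset_Bb [OpensMeasurableSpace X] : Cb X ⊆ Bb X :=
  fun _ hf => ⟨hf.1.measurable, hf.2⟩

lemma Ub_subset_Bb [OpensMeasurableSpace X] : Ub X ⊆ Bb X :=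
  fun _ hf => ⟨hf.1.measurable, hf.2⟩

lemma integrable_of_mem_Bb {f : X → ℝ} (hf : f ∈ Bb X) (μ : Measure X) [IsFiniteMeasure μ] :
    Integrable f μ := by
  obtain ⟨M, hM⟩ := hf.2
  exact Integrable.of_bound hf.1.aestronglyMeasurable M (ae_of_all _ hM)

lemma monotoneOn_Bb {φ : (X → ℝ) → ℝ}
    (hadd : ∀ f ∈ Bb X, ∀ g ∈ Bb X, φ (f + g) = φ f + φ g)
    (hpos : ∀ f ∈ Bb X, (∀ x, 0 ≤ f x) → 0 ≤ φ f) : MonotoneOn φ (Bb X) := by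
  intro f hf g hg hfg
  have hgf := sub_mem_Bb hg hf
  have := hadd f hf (g - f) hgf
  rw [add_sub_cancel] at this
  linarith [hpos _ hgf fun x => sub_nonneg.2 (hfg x)]

end BoundedFunctions

section Conjugates

variable {X : Type*} [MeasurableSpace X] {φ : (X → ℝ) → ℝ}

lemma coe_integral_sub_le_conjOnR {S : Set (X → ℝ)} {f : X → ℝ} (hf : f ∈ S) (ν : Measure X) :
    ((∫ x, f x ∂ν : ℝ) : EReal) - φ f ≤ conjOnR S φ ν :=
  le_iSup₂ (f := fun g (_ : g ∈ S) => ((∫ x, g x ∂ν : ℝ) : EReal) - φ g) f hf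

lemma conjOnR_Cb_eq_zero [TopologicalSpace X] {μ : Measure X}
    (hrep : ∀ f ∈ Cb X, φ f = ∫ x, f x ∂μ) : conjOnR (Cb X) φ μ = 0 := by
  have hterm : ∀ f ∈ Cb X, ((∫ x, f x ∂μ : ℝ) : EReal) - φ f = 0 := fun f hf => by
    rw [hrep f hf, ← EReal.coe_sub, sub_self, EReal.coe_zero]
  have hzero : (0 : X → ℝ) ∈ Cb X := ⟨continuous_const, 0, by simp⟩
  exact le_antisymm (iSup₂_le fun f hf => (hterm f hf).le)
    ((hterm 0 hzero).symm.le.trans (coe_integral_sub_le_conjOnR hzero μ))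

end Conjugates

section Representation

variable {X : Type*} [PseudoMetricSpace X] [MeasurableSpace X] {φ : (X → ℝ) → ℝ}
  {μ : Measure X} [IsFiniteMeasure μ]

lemma le_integral_of_mem_Ub [OpensMeasurableSpace X] (hmono : MonotoneOn φ (Bb X))
    (hrep : ∀ f ∈ Cb X, φ f = ∫ x, f x ∂μ) {f : X → ℝ} (hf : f ∈ Ub X) :
    φ f ≤ ∫ x, f x ∂μ := by
  obtain ⟨M, hM⟩ := hf.2
  have hM' : ∀ x, f x ≤ M := fun x => (abs_le.1 (hM x)).2
  have hGCb : ∀ n, lipEnvelope f n ∈ Cb X := fun n =>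
    ⟨(lipschitzWith_lipEnvelope hM' n).continuous, M, abs_lipEnvelope_le hM n⟩
  have hφG : ∀ n, φ f ≤ ∫ x, lipEnvelope f n x ∂μ := fun n =>
    (hmono (Ub_subset_Bb hf) (Cb_subset_Bb (hGCb n)) (le_lipEnvelope hM' n)).trans_eq
      (hrep _ (hGCb n))
  have hlim : Tendsto (fun n => ∫ x, lipEnvelope f n x ∂μ) atTop (𝓝 (∫ x, f x ∂μ)) :=
    tendsto_integral_of_dominated_convergence (fun _ => M)
      (fun n => (hGCb n).1.aestronglyMeasurable) (integrable_const M)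
      (fun n => ae_of_all _ (abs_lipEnvelope_le hM n))
      (ae_of_all _ (hf.1.tendsto_lipEnvelope hM'))
  exact ge_of_tendsto' hlim hφG

lemma exists_mem_Ub_le_integral_le [BorelSpace X] {f : X → ℝ} (hf : f ∈ Bb X) {ε : ℝ}
    (hε : 0 < ε) :
    ∃ g ∈ Ub X, g ≤ f ∧ (∫ x, f x ∂μ) - ε ≤ ∫ x, g x ∂μ := by
  obtain ⟨M, hM⟩ := hf.2
  have hshift : ∀ x, ((f x + M).toNNReal : ℝ) = f x + M := fun x =>
    Real.coe_toNNReal _ (by linarith [(abs_le.1 (hM x)).1])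
  have hint : Integrable (fun x => f x + M) μ :=
    (integrable_of_mem_Bb hf μ).add (integrable_const M)
  obtain ⟨g, hgf, hgusc, hgint, hgε⟩ := exists_upperSemicontinuous_le_integral_le
    (fun x => (f x + M).toNNReal) (by simpa only [hshift] using hint) hε
  have hgf' : ∀ x, (g x : ℝ) - M ≤ f x := fun x => by
    have : (g x : ℝ) ≤ f x + M := (hshift x).symm ▸ NNReal.coe_le_coe.2 (hgf x)
    linarith
  refine ⟨fun x => g x - M, ⟨?_, M, fun x => abs_le.2 ⟨?_, ?_⟩⟩, hgf', ?_⟩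
  · exact (continuous_sub_right M).comp_upperSemicontinuous
      (NNReal.continuous_coe.comp_upperSemicontinuous hgusc NNReal.coe_mono)
      fun _ _ h => sub_le_sub_right h M
  · linarith [(g x).coe_nonneg]
  · linarith [hgf' x, (abs_le.1 (hM x)).2]
  · simp only [hshift] at hgε
    rw [integral_add (integrable_of_mem_Bb hf μ) (integrable_const M)] at hgε
    rw [integral_sub hgint (integrable_const M)]
    linarith

lemma eq_integral_of_mem_Ub_of_conjOnR_eq [OpensMeasurableSpace X] (hmono : MonotoneOn φ (Bb X))
    (hrep : ∀ f ∈ Cb X, φ f = ∫ x, f x ∂μ) (hconj : conjOnR (Cb X) φ μ = conjOnR (Ub X) φ μ)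
    {f : X → ℝ} (hf : f ∈ Ub X) : φ f = ∫ x, f x ∂μ := by
  have h := coe_integral_sub_le_conjOnR (φ := φ) hf μ
  rw [← hconj, conjOnR_Cb_eq_zero hrep, ← EReal.coe_sub, EReal.coe_nonpos] at h
  exact le_antisymm (le_integral_of_mem_Ub hmono hrep hf) (by linarith)

end Representation

section LowerRegularization

variable {X : Type*} [MetricSpace X] [MeasurableSpace X] {φ : (X → ℝ) → ℝ}
  {μ : Measure X} [IsFiniteMeasure μ] {f : X → ℝ}

lemma integral_mem_upperBounds_lowerRegR [OpensMeasurableSpace X]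
    (hUb : ∀ g ∈ Ub X, φ g ≤ ∫ x, g x ∂μ) (hf : f ∈ Bb X) :
    ∫ x, f x ∂μ ∈ upperBounds (φ '' {g | g ∈ Ub X ∧ ∀ x, g x ≤ f x}) := by
  rintro _ ⟨g, ⟨hg, hgf⟩, rfl⟩
  exact (hUb g hg).trans
    (integral_mono (integrable_of_mem_Bb (Ub_subset_Bb hg) μ) (integrable_of_mem_Bb hf μ) hgf)

lemma lowerRegR_le_integral [OpensMeasurableSpace X] (hUb : ∀ g ∈ Ub X, φ g ≤ ∫ x, g x ∂μ)
    (hf : f ∈ Bb X) : lowerRegR φ f ≤ ∫ x, f x ∂μ := by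
  obtain ⟨M, hM⟩ := hf.2
  have hconst : (fun _ => -M) ∈ {g | g ∈ Ub X ∧ ∀ x, g x ≤ f x} :=
    ⟨⟨upperSemicontinuous_const, |M|, fun _ => by simp⟩, fun x => (abs_le.1 (hM x)).1⟩
  exact csSup_le ⟨_, mem_image_of_mem φ hconst⟩ (integral_mem_upperBounds_lowerRegR hUb hf)

lemma lowerRegR_eq_integral [BorelSpace X] (hUb : ∀ g ∈ Ub X, φ g = ∫ x, g x ∂μ)
    (hf : f ∈ Bb X) : lowerRegR φ f = ∫ x, f x ∂μ := by
  have hUb_le : ∀ g ∈ Ub X, φ g ≤ ∫ x, g x ∂μ := fun g hg => (hUb g hg).le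
  refine le_antisymm (lowerRegR_le_integral hUb_le hf) (le_of_forall_sub_le fun ε hε => ?_)
  obtain ⟨g, hg, hgf, hgε⟩ := exists_mem_Ub_le_integral_le (μ := μ) hf hε
  calc (∫ x, f x ∂μ) - ε ≤ ∫ x, g x ∂μ := hgε
    _ = φ g := (hUb g hg).symm
    _ ≤ lowerRegR φ f :=
      le_csSup ⟨_, integral_mem_upperBounds_lowerRegR hUb_le hf⟩ ⟨g, ⟨hg, hgf⟩, rfl⟩

end LowerRegularization

theorem stmt13_general (φ : (Ω → ℝ) → ℝ)
    (hadd : ∀ f ∈ Bb Ω, ∀ g ∈ Bb Ω, φ (f + g) = φ f + φ g)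
    (hpos : ∀ f ∈ Bb Ω, (∀ ω, 0 ≤ f ω) → 0 ≤ φ f)
    (μ : Measure Ω) (hμ : μ ∈ caReg Ω)
    (hrep : ∀ f ∈ Cb Ω, φ f = ∫ ω, f ω ∂μ) :
    (∀ f ∈ Ub Ω, φ f ≤ ∫ ω, f ω ∂μ) ∧
    (∀ f ∈ Bb Ω, lowerRegR φ f ≤ ∫ ω, f ω ∂μ) ∧
    ((∀ ν ∈ caReg Ω, conjOnR (Cb Ω) φ ν = conjOnR (Ub Ω) φ ν) →
      (∀ f ∈ Ub Ω, φ f = ∫ ω, f ω ∂μ) ∧ (∀ f ∈ Bb Ω, lowerRegR φ f = ∫ ω, f ω ∂μ)) ∧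
    ((∀ f ∈ Bb Ω, φ f = lowerRegR φ f) →
      (∀ ν ∈ caReg Ω, conjOnR (Cb Ω) φ ν = conjOnR (Ub Ω) φ ν) →
      ∀ f ∈ Bb Ω, φ f = ∫ ω, f ω ∂μ) := by
  have : IsFiniteMeasure μ := hμ.1
  have hmono := monotoneOn_Bb hadd hpos
  have hUb_le : ∀ f ∈ Ub Ω, φ f ≤ ∫ ω, f ω ∂μ := fun f hf => le_integral_of_mem_Ub hmono hrep hf
  have hUb_eq : (∀ ν ∈ caReg Ω, conjOnR (Cb Ω) φ ν = conjOnR (Ub Ω) φ ν) →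
      ∀ f ∈ Ub Ω, φ f = ∫ ω, f ω ∂μ := fun hconj f hf =>
    eq_integral_of_mem_Ub_of_conjOnR_eq hmono hrep (hconj μ hμ) hf
  refine ⟨hUb_le, fun f hf => lowerRegR_le_integral hUb_le hf, fun hconj =>
    ⟨hUb_eq hconj, fun f hf => lowerRegR_eq_integral (hUb_eq hconj) hf⟩, fun hlow hconj f hf => ?_⟩
  exact (hlow f hf).trans (lowerRegR_eq_integral (hUb_eq hconj) hf)

/-- Corollary 1.7, second part (on a metric space): inequalities (9) for a positive linear
functional satisfying (C), equalities under coincidence of the conjugates, and the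
representation (10) for lower regular φ. -/
theorem stmt13 (φ : (Ω → ℝ) → ℝ)
    (hadd : ∀ f ∈ Bb Ω, ∀ g ∈ Bb Ω, φ (f + g) = φ f + φ g)
    (hsmul : ∀ c : ℝ, ∀ f ∈ Bb Ω, φ (c • f) = c * φ f)
    (hpos : ∀ f ∈ Bb Ω, (∀ ω, 0 ≤ f ω) → 0 ≤ φ f)
    (hC : CondCR φ)
    (μ : Measure Ω) (hμ : μ ∈ caReg Ω)
    (hrep : ∀ f ∈ Cb Ω, φ f = ∫ ω, f ω ∂μ) :
    (∀ f ∈ Ub Ω, φ f ≤ ∫ ω, f ω ∂μ) ∧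
    (∀ f ∈ Bb Ω, lowerRegR φ f ≤ ∫ ω, f ω ∂μ) ∧
    ((∀ ν ∈ caReg Ω, conjOnR (Cb Ω) φ ν = conjOnR (Ub Ω) φ ν) →
      (∀ f ∈ Ub Ω, φ f = ∫ ω, f ω ∂μ) ∧ (∀ f ∈ Bb Ω, lowerRegR φ f = ∫ ω, f ω ∂μ)) ∧
    ((∀ f ∈ Bb Ω, φ f = lowerRegR φ f) →
      (∀ ν ∈ caReg Ω, conjOnR (Cb Ω) φ ν = conjOnR (Ub Ω) φ ν) →
      ∀ f ∈ Bb Ω, φ f = ∫ ω, f ω ∂μ) :=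
  stmt13_general φ hadd hpos μ hμ hrep
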